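/- arXiv:1302.4532 — 3 statements merged into one kernel-verified Lean document; each statement's English description precedes it below -/
import Mathlib

section
/- Let μ be an absolutely continuous probability measure on [-1,1] whose density μ(v) satisfies μ(v) ≥ C_0(1 - v) for all v ∈ (0,1), for some C_0 > 0. Fix λ > 1 and set n = exp(1 + λ²/C_0). Then for every 0 < ε < 1/n, one has ∫_{-1}^{1} μ(v) dv/(λv - λ - ε)² > 1. -/
open MeasureTheory

/-- For a probability density `f` on `[-1,1]` with `f(v) ≥ C₀(1-v)` on `(0,1)`,
`λ > 1`, `n = exp(1 + λ²/C₀)` and `0 < ε < 1/n`, one has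
`∫ f(v)/(λv - λ - ε)² dv > 1`. -/
theorem H_gt_one_beyond_one (f : ℝ → ℝ) (hint : Integrable f)
    (hnn : ∀ v, 0 ≤ f v) (hsupp : ∀ v, v ∉ Set.Icc (-1 : ℝ) 1 → f v = 0)
    (hone : ∫ v, f v = 1)
    (C0 : ℝ) (hC0 : 0 < C0)
    (hlow : ∀ v ∈ Set.Ioo (0 : ℝ) 1, C0 * (1 - v) ≤ f v)
    (lam : ℝ) (hlam : 1 < lam)
    (ε : ℝ) (hε0 : 0 < ε) (hεn : ε < 1 / Real.exp (1 + lam ^ 2 / C0)) :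
    1 < ∫ v, f v / (lam * v - lam - ε) ^ 2 := by
  have hlam0 : (0:ℝ) < lam := by linarith
  set n : ℝ := Real.exp (1 + lam ^ 2 / C0) with hn
  have hn0 : 0 < n := Real.exp_pos _
  have hn1 : 1 < n := by
    rw [hn]
    have : (0:ℝ) < 1 + lam ^ 2 / C0 := by positivity
    calc (1:ℝ) = Real.exp 0 := by simp
    _ < Real.exp (1 + lam ^ 2 / C0) := Real.exp_lt_exp.mpr this
  have hεn' : ε * n < 1 := (lt_div_iff₀ hn0).mp hεn
  clear_value n
  set a : ℝ := 1 - (n - 1) * ε / lam with ha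
  clear_value a
  have ha1 : a < 1 := by
    have : 0 < (n - 1) * ε / lam := div_pos (mul_pos (by linarith) hε0) hlam0
    linarith
  have ha0 : 0 < a := by
    have h1 : (n - 1) * ε < 1 := by nlinarith
    have h2 : (n - 1) * ε / lam < 1 := by
      rw [div_lt_one hlam0]; linarith
    linarith
  -- the integrand
  set g : ℝ → ℝ := fun v => f v / (lam * v - lam - ε) ^ 2 with hg
  have hg_nonneg : ∀ v, 0 ≤ g v := fun v => div_nonneg (hnn v) (sq_nonneg _)
  -- integrability of g
  have hden : ∀ v ∈ Set.Icc (-1:ℝ) 1, ε ^ 2 ≤ (lam * v - lam - ε) ^ 2 := by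
    intro v hv
    have hv1 : v ≤ 1 := hv.2
    have : lam * v - lam - ε ≤ -ε := by nlinarith
    nlinarith
  have hg_int : Integrable g := by
    have hmeas : AEStronglyMeasurable g volume := by
      simp only [hg, div_eq_mul_inv]
      exact hint.aestronglyMeasurable.mul
        ((((continuous_const.mul continuous_id).sub continuous_const).sub
          continuous_const).pow 2).measurable.inv.aestronglyMeasurable
    refine Integrable.mono (hint.div_const (ε ^ 2)) hmeas (Filter.Eventually.of_forall ?_)
    intro v
    by_cases hv : v ∈ Set.Icc (-1:ℝ) 1
    · have h1 := hden v hv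
      have h2 : (0:ℝ) < ε ^ 2 := by positivity
      rw [Real.norm_eq_abs, Real.norm_eq_abs, hg]
      simp only
      rw [abs_div, abs_div, abs_of_nonneg (hnn v),
        abs_of_nonneg (sq_nonneg (lam * v - lam - ε)), abs_of_nonneg h2.le]
      gcongr
      exact hnn v
    · simp [hg, hsupp v hv]
  -- lower bound integrand
  set h : ℝ → ℝ := fun v => C0 * (1 - v) / (lam * (1 - v) + ε) ^ 2 with hh
  have hupos : ∀ v : ℝ, v ≤ 1 → 0 < lam * (1 - v) + ε := by
    intro v hv
    have : 0 ≤ lam * (1 - v) := by nlinarith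
    linarith
  have hhg : ∀ v ∈ Set.Ioc a 1, h v ≤ g v := by
    intro v hv
    have hsq : (lam * v - lam - ε) ^ 2 = (lam * (1 - v) + ε) ^ 2 := by ring
    rcases eq_or_lt_of_le hv.2 with h1 | h1
    · have : h v = 0 := by simp [hh, h1]
      rw [this]; exact hg_nonneg v
    · have hv0 : 0 < v := lt_trans ha0 hv.1
      have hf := hlow v ⟨hv0, h1⟩
      rw [hg, hh]
      simp only
      rw [hsq]
      gcongr
  -- continuity/integrability of h on [a,1]
  have hcont : ContinuousOn h (Set.Icc a 1) := by
    apply ContinuousOn.div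
    · exact (continuous_const.mul (continuous_const.sub continuous_id)).continuousOn
    · exact ((continuous_const.mul (continuous_const.sub continuous_id)).add
        continuous_const |>.pow 2).continuousOn
    · intro v hv
      exact pow_ne_zero 2 (ne_of_gt (hupos v hv.2))
  have hh_intOn : IntegrableOn h (Set.Ioc a 1) := by
    exact (hcont.integrableOn_Icc).mono_set Set.Ioc_subset_Icc_self
  -- set integral comparison
  have step1 : ∫ v in Set.Ioc a 1, h v ≤ ∫ v in Set.Ioc a 1, g v := by
    exact setIntegral_mono_on hh_intOn hg_int.integrableOn measurableSet_Ioc hhg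
  have step2 : ∫ v in Set.Ioc a 1, g v ≤ ∫ v, g v := by
    exact setIntegral_le_integral hg_int (Filter.Eventually.of_forall hg_nonneg)
  -- FTC
  set G : ℝ → ℝ := fun v =>
    -(C0 / lam ^ 2) * (Real.log (lam * (1 - v) + ε) + ε / (lam * (1 - v) + ε)) with hG
  have hderiv : ∀ v ∈ Set.uIcc a (1:ℝ), HasDerivAt G (h v) v := by
    intro v hv
    rw [Set.uIcc_of_le ha1.le] at hv
    have huv : 0 < lam * (1 - v) + ε := hupos v hv.2
    have h1 : HasDerivAt (fun x : ℝ => lam * (1 - x) + ε) (-lam) v := by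
      simpa using (((hasDerivAt_id v).const_sub 1).const_mul lam).add_const ε
    have hlog : HasDerivAt (fun x : ℝ => Real.log (lam * (1 - x) + ε))
        ((lam * (1 - v) + ε)⁻¹ * (-lam)) v :=
      by have := (Real.hasDerivAt_log (ne_of_gt huv)).comp v h1; exact this
    have hinv : HasDerivAt (fun x : ℝ => ε / (lam * (1 - x) + ε))
        (ε * (lam / (lam * (1 - v) + ε) ^ 2)) v := by
      have := (h1.inv (ne_of_gt huv)).const_mul ε
      simpa [div_eq_mul_inv, neg_neg] using this
    have := (hlog.add hinv).const_mul (-(C0 / lam ^ 2))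
    refine HasDerivAt.congr_deriv this ?_
    rw [hh]
    field_simp
    ring
  have hh_ii : IntervalIntegrable h volume a 1 := by
    rw [intervalIntegrable_iff_integrableOn_Ioc_of_le ha1.le]
    exact hh_intOn
  have hftc : ∫ v in a..1, h v = G 1 - G a :=
    intervalIntegral.integral_eq_sub_of_hasDerivAt hderiv hh_ii
  have hIoc : ∫ v in a..1, h v = ∫ v in Set.Ioc a 1, h v :=
    intervalIntegral.integral_of_le ha1.le
  -- compute G 1 - G a
  have hua : lam * (1 - a) + ε = n * ε := by
    rw [ha]
    field_simp
    ring
  have hu1 : lam * (1 - (1:ℝ)) + ε = ε := by ring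
  have hval : G 1 - G a = 1 + C0 / (lam ^ 2 * n) := by
    rw [hG]
    simp only [hu1, hua]
    rw [Real.log_mul (ne_of_gt hn0) (ne_of_gt hε0), hn, Real.log_exp]
    field_simp
    ring
  have hfin : (1:ℝ) < G 1 - G a := by
    rw [hval]
    have : 0 < C0 / (lam ^ 2 * n) := by positivity
    linarith
  calc (1:ℝ) < G 1 - G a := hfin
  _ = ∫ v in a..1, h v := hftc.symm
  _ = ∫ v in Set.Ioc a 1, h v := hIoc
  _ ≤ ∫ v in Set.Ioc a 1, g v := step1
  _ ≤ ∫ v, g v := step2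
end

section
/- Let H be an N×N Hermitian matrix with resolvent G, and let H^{(ij)} be the minor with rows/columns i and j removed (i ≠ j). Then G_{ij}(z) = -G_{ii}(z) G^{(i)}_{jj}(z) ( h_{ij} - Σ_{m,n ∉ {i,j}} h_{im} G^{(ij)}_{mn}(z) h_{nj} ) for all z ∈ ℂ^+. -/
open Matrix


private lemma sum_split {α β : Type*} [Fintype α] [DecidableEq α] [AddCommMonoid β]
    (a : α) (f : α → β) : ∑ x, f x = f a + ∑ x : {y : α // y ≠ a}, f (x : α) := by
  rw [Fintype.sum_eq_add_sum_compl a]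
  congr 1
  exact (Finset.sum_subtype ({a}ᶜ) (p := fun y => y ≠ a) (fun x => by simp) f)

private lemma herm_unit {n : Type*} [Fintype n] [DecidableEq n] (M : Matrix n n ℂ)
    (hM : M.IsHermitian) (z : ℂ) (hz : z.im ≠ 0) : IsUnit (M - z • 1).det := by
  rw [isUnit_iff_ne_zero]
  intro hdet
  obtain ⟨v, hv, hMv⟩ := (Matrix.exists_mulVec_eq_zero_iff).2 hdet
  have h1 : M.mulVec v = z • v := by
    rw [sub_mulVec, smul_mulVec, one_mulVec, sub_eq_zero] at hMv
    exact hMv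
  have hs : star (star v ⬝ᵥ v) = star v ⬝ᵥ v := by
    conv_lhs => rw [star_dotProduct, star_star]
  have h2 : star v ⬝ᵥ M.mulVec v = z * (star v ⬝ᵥ v) := by
    rw [h1, dotProduct_smul, smul_eq_mul]
  have h3 : star (star v ⬝ᵥ M.mulVec v) = star v ⬝ᵥ M.mulVec v := by
    conv_lhs => rw [star_dotProduct, star_star, star_mulVec, hM.eq]
    rw [← dotProduct_mulVec]
  rw [h2, star_mul', hs] at h3
  have hvv : star v ⬝ᵥ v ≠ 0 := by
    open scoped ComplexOrder in
    exact fun h => hv (dotProduct_star_self_eq_zero.mp h)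
  have hcz : (starRingEnd ℂ) z = z := mul_right_cancel₀ hvv h3
  exact hz (Complex.conj_eq_iff_im.mp hcz)

private lemma col_lemma {n : Type*} [Fintype n] [DecidableEq n] {K : Type*} [Field K]
    (B : Matrix n n K) (hB : IsUnit B.det) (j : n)
    (hBj : IsUnit ((B.submatrix (fun a : {x : n // x ≠ j} => (a : n))
      (fun a : {x : n // x ≠ j} => (a : n))).det))
    (k : n) (hk : k ≠ j) :
    B⁻¹ k j = -(∑ m : {x : n // x ≠ j},
        ((B.submatrix (fun a : {x : n // x ≠ j} => (a : n))
          (fun a : {x : n // x ≠ j} => (a : n)))⁻¹ ⟨k, hk⟩ m) * B (m : n) j) * B⁻¹ j j := by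
  set Bj := B.submatrix (fun a : {x : n // x ≠ j} => (a : n))
      (fun a : {x : n // x ≠ j} => (a : n)) with hBjdef
  set v : {x : n // x ≠ j} → K := fun m => B⁻¹ (m : n) j with hvdef
  have hv : Bj.mulVec v = fun k' : {x : n // x ≠ j} => -(B (k' : n) j * B⁻¹ j j) := by
    funext k'
    have h0 : ∑ m, B (k' : n) m * B⁻¹ m j = 0 := by
      have h := Matrix.mul_nonsing_inv B hB
      have h2 := congrFun (congrFun h (k' : n)) j
      rw [Matrix.mul_apply] at h2
      rw [h2, Matrix.one_apply_ne k'.2]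
    rw [sum_split j] at h0
    have : Bj.mulVec v k' = ∑ m : {x : n // x ≠ j}, B (k' : n) (m : n) * B⁻¹ (m : n) j := by
      simp [Matrix.mulVec, dotProduct, hBjdef, hvdef]
    rw [this]
    linear_combination h0
  have hvv : v = Bj⁻¹.mulVec (fun k' : {x : n // x ≠ j} => -(B (k' : n) j * B⁻¹ j j)) := by
    rw [← hv, Matrix.mulVec_mulVec, Matrix.nonsing_inv_mul _ hBj, Matrix.one_mulVec]
  have := congrFun hvv ⟨k, hk⟩
  simp only [hvdef, Matrix.mulVec, dotProduct] at this
  rw [this, neg_mul, Finset.sum_mul, ← Finset.sum_neg_distrib]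
  apply Finset.sum_congr rfl
  intro m _
  ring

private lemma row_lemma {n : Type*} [Fintype n] [DecidableEq n] {K : Type*} [Field K]
    (A : Matrix n n K) (hA : IsUnit A.det) (i : n)
    (hAi : IsUnit ((A.submatrix (fun a : {x : n // x ≠ i} => (a : n))
      (fun a : {x : n // x ≠ i} => (a : n))).det))
    (k : n) (hk : k ≠ i) :
    A⁻¹ i k = -(A⁻¹ i i) * ∑ m : {x : n // x ≠ i},
        A i (m : n) * ((A.submatrix (fun a : {x : n // x ≠ i} => (a : n))
          (fun a : {x : n // x ≠ i} => (a : n)))⁻¹ m ⟨k, hk⟩) := by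
  set Ai := A.submatrix (fun a : {x : n // x ≠ i} => (a : n))
      (fun a : {x : n // x ≠ i} => (a : n)) with hAidef
  set u : {x : n // x ≠ i} → K := fun m => A⁻¹ i (m : n) with hudef
  have hu : Matrix.vecMul u Ai = fun k' : {x : n // x ≠ i} => -(A⁻¹ i i * A i (k' : n)) := by
    funext k'
    have h0 : ∑ m, A⁻¹ i m * A m (k' : n) = 0 := by
      have h := Matrix.nonsing_inv_mul A hA
      have h2 := congrFun (congrFun h i) (k' : n)
      rw [Matrix.mul_apply] at h2
      rw [h2, Matrix.one_apply_ne (Ne.symm k'.2)]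
    rw [sum_split i] at h0
    have : Matrix.vecMul u Ai k' = ∑ m : {x : n // x ≠ i}, A⁻¹ i (m : n) * A (m : n) (k' : n) := by
      simp [Matrix.vecMul, dotProduct, hAidef, hudef]
    rw [this]
    linear_combination h0
  have huu : u = Matrix.vecMul (fun k' : {x : n // x ≠ i} => -(A⁻¹ i i * A i (k' : n))) Ai⁻¹ := by
    rw [← hu, Matrix.vecMul_vecMul, Matrix.mul_nonsing_inv _ hAi, Matrix.vecMul_one]
  have := congrFun huu ⟨k, hk⟩
  simp only [hudef, Matrix.vecMul, dotProduct] at this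
  rw [this, neg_mul, Finset.mul_sum, ← Finset.sum_neg_distrib]
  apply Finset.sum_congr rfl
  intro m _
  ring

private lemma sub_smul_sub {n m : Type*} [Fintype n] [DecidableEq n] [DecidableEq m]
    (M : Matrix n n ℂ) (z : ℂ) (f : m → n) (hf : Function.Injective f) :
    (M - z • 1).submatrix f f = M.submatrix f f - z • 1 := by
  ext a b
  by_cases h : a = b
  · subst h
    simp [Matrix.submatrix_apply, Matrix.sub_apply, Matrix.smul_apply, Matrix.one_apply_eq]
  · simp [Matrix.submatrix_apply, Matrix.sub_apply, Matrix.smul_apply,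
      Matrix.one_apply_ne h, Matrix.one_apply_ne (hf.ne h)]


/-- Resolvent identity for off-diagonal entries:
`G_{ij} = -G_{ii} G^{(i)}_{jj} (h_{ij} - ∑_{m,n ∉ {i,j}} h_{im} G^{(ij)}_{mn} h_{nj})`. -/
theorem offdiagonal_resolvent_identity (N : ℕ) (H : Matrix (Fin N) (Fin N) ℂ)
    (hH : H.IsHermitian) (z : ℂ) (hz : 0 < z.im) (i j : Fin N) (hij : i ≠ j) :
    ((H - z • 1)⁻¹) i j
      = -(((H - z • 1)⁻¹) i i) *
        ((((H.submatrix (fun a : {x : Fin N // x ≠ i} => (a : Fin N))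
            (fun a : {x : Fin N // x ≠ i} => (a : Fin N))) - z • 1)⁻¹)
          ⟨j, hij.symm⟩ ⟨j, hij.symm⟩) *
        (H i j -
          ∑ m : {x : Fin N // x ≠ i ∧ x ≠ j},
            ∑ n : {x : Fin N // x ≠ i ∧ x ≠ j},
              H i (m : Fin N) *
              ((((H.submatrix (fun a : {x : Fin N // x ≠ i ∧ x ≠ j} => (a : Fin N))
                  (fun a : {x : Fin N // x ≠ i ∧ x ≠ j} => (a : Fin N))) - z • 1)⁻¹) m n) *
              H (n : Fin N) j) := by
  have hz' : z.im ≠ 0 := ne_of_gt hz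
  set j' : {x : Fin N // x ≠ i} := ⟨j, hij.symm⟩ with hj'
  -- the equivalence between the two descriptions of the double minor index set
  let e : {x : Fin N // x ≠ i ∧ x ≠ j} ≃ {y : {x : Fin N // x ≠ i} // y ≠ j'} :=
  { toFun := fun m => ⟨⟨↑m, m.2.1⟩, fun h => m.2.2 (congrArg Subtype.val h)⟩
    invFun := fun k => ⟨(↑k : {x : Fin N // x ≠ i}), ⟨(↑k : {x : Fin N // x ≠ i}).2,
      fun h => k.2 (Subtype.ext h)⟩⟩
    left_inv := fun m => rfl
    right_inv := fun k => rfl }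
  -- matrices
  set A := H - z • 1 with hAdef
  set M1 := H.submatrix (fun a : {x : Fin N // x ≠ i} => (a : Fin N))
      (fun a : {x : Fin N // x ≠ i} => (a : Fin N)) with hM1
  set M2 := H.submatrix (fun a : {x : Fin N // x ≠ i ∧ x ≠ j} => (a : Fin N))
      (fun a : {x : Fin N // x ≠ i ∧ x ≠ j} => (a : Fin N)) with hM2
  -- invertibility
  have hA : IsUnit A.det := herm_unit H hH z hz'
  have hM1herm : M1.IsHermitian := hH.submatrix _
  have hA1 : IsUnit (M1 - z • 1).det := herm_unit M1 hM1herm z hz'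
  -- submatrix identifications
  have hsub1 : A.submatrix (fun a : {x : Fin N // x ≠ i} => (a : Fin N))
      (fun a : {x : Fin N // x ≠ i} => (a : Fin N)) = M1 - z • 1 :=
    sub_smul_sub H z _ (fun a b h => Subtype.ext h)
  set Bsub := (M1 - z • 1).submatrix (fun a : {y : {x : Fin N // x ≠ i} // y ≠ j'} =>
      (a : {x : Fin N // x ≠ i})) (fun a : {y : {x : Fin N // x ≠ i} // y ≠ j'} =>
      (a : {x : Fin N // x ≠ i})) with hBsub
  have hBsub2 : Bsub = M1.submatrix (fun a : {y : {x : Fin N // x ≠ i} // y ≠ j'} =>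
      (a : {x : Fin N // x ≠ i})) (fun a : {y : {x : Fin N // x ≠ i} // y ≠ j'} =>
      (a : {x : Fin N // x ≠ i})) - z • 1 :=
    sub_smul_sub M1 z _ (fun a b h => Subtype.ext h)
  have hBherm : (M1.submatrix (fun a : {y : {x : Fin N // x ≠ i} // y ≠ j'} =>
      (a : {x : Fin N // x ≠ i})) (fun a : {y : {x : Fin N // x ≠ i} // y ≠ j'} =>
      (a : {x : Fin N // x ≠ i}))).IsHermitian :=
    hM1herm.submatrix _
  have hBunit : IsUnit Bsub.det := by
    rw [hBsub2]; exact herm_unit _ hBherm z hz'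
  -- relating M2 - z•1 to Bsub via e
  have hM2B : M2 - z • 1 = Bsub.submatrix e e := by
    ext a b
    by_cases h : a = b
    · subst h
      simp only [hBsub, hM2, Matrix.submatrix_apply, Matrix.sub_apply, Matrix.smul_apply,
        Matrix.one_apply_eq, smul_eq_mul, mul_one]
      rfl
    · have h2 : e a ≠ e b := fun hh => h (e.injective hh)
      have h3 : ((e a : {x : Fin N // x ≠ i})) ≠ (e b : {x : Fin N // x ≠ i}) :=
        fun hh => h2 (Subtype.ext hh)
      have h4 : (a : Fin N) ≠ (b : Fin N) := fun hh => h (Subtype.ext hh)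
      simp only [hBsub, hM2, Matrix.submatrix_apply, Matrix.sub_apply, Matrix.smul_apply,
        Matrix.one_apply_ne h3, Matrix.one_apply_ne h, Matrix.one_apply_ne h4, smul_eq_mul,
        mul_zero, sub_zero]
      rfl
  have hM2inv : ∀ m n : {x : Fin N // x ≠ i ∧ x ≠ j},
      ((M2 - z • 1)⁻¹) m n = Bsub⁻¹ (e m) (e n) := by
    intro m n
    rw [hM2B, Matrix.inv_submatrix_equiv]
    rfl
  -- Step 1: row expansion
  have step1 : A⁻¹ i j = -(A⁻¹ i i) * ∑ m : {x : Fin N // x ≠ i},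
      A i (m : Fin N) * (((M1 - z • 1))⁻¹ m j') := by
    have hAi : IsUnit ((A.submatrix (fun a : {x : Fin N // x ≠ i} => (a : Fin N))
        (fun a : {x : Fin N // x ≠ i} => (a : Fin N))).det) := by rw [hsub1]; exact hA1
    have := row_lemma A hA i hAi j hij.symm
    rw [hsub1] at this
    exact this
  -- Step 2: column expansion for k ≠ j'
  have step2 : ∀ k : {y : {x : Fin N // x ≠ i} // y ≠ j'},
      (M1 - z • 1)⁻¹ (k : {x : Fin N // x ≠ i}) j'
        = -(∑ m : {y : {x : Fin N // x ≠ i} // y ≠ j'},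
            Bsub⁻¹ k m
              * (M1 - z • 1) (m : {x : Fin N // x ≠ i}) j')
          * (M1 - z • 1)⁻¹ j' j' := by
    intro k
    exact col_lemma (M1 - z • 1) hA1 j' hBunit (k : {x : Fin N // x ≠ i}) k.2
  -- off-diagonal entries
  have hAH : ∀ m : {x : Fin N // x ≠ i}, A i (m : Fin N) = H i (m : Fin N) := by
    intro m
    simp [hAdef, Matrix.sub_apply, Matrix.smul_apply, Matrix.one_apply_ne (Ne.symm m.2)]
  have hM1H : ∀ m : {y : {x : Fin N // x ≠ i} // y ≠ j'},
      (M1 - z • 1) ((m : {x : Fin N // x ≠ i})) j' = H ((m : {x : Fin N // x ≠ i}) : Fin N) j := by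
    intro m
    simp [hM1, Matrix.sub_apply, Matrix.smul_apply, Matrix.one_apply_ne m.2]
    rfl
  -- put it together
  rw [step1]
  rw [sum_split j']
  set g := (M1 - z • 1)⁻¹ j' j' with hg
  have hAij : A i (j' : Fin N) = H i j := hAH j'
  rw [hAij]
  have hsum : ∑ k : {y : {x : Fin N // x ≠ i} // y ≠ j'},
      A i ((k : {x : Fin N // x ≠ i}) : Fin N) * (M1 - z • 1)⁻¹ (k : {x : Fin N // x ≠ i}) j'
      = ∑ m : {x : Fin N // x ≠ i ∧ x ≠ j},
          H i (m : Fin N) * (-(∑ n : {x : Fin N // x ≠ i ∧ x ≠ j},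
            ((M2 - z • 1)⁻¹) m n * H (n : Fin N) j) * g) := by
    rw [← Equiv.sum_comp e]
    apply Finset.sum_congr rfl
    intro m _
    rw [step2 (e m), hAH]
    have hinner : ∑ n : {y : {x : Fin N // x ≠ i} // y ≠ j'},
        Bsub⁻¹ (e m) n * (M1 - z • 1) (n : {x : Fin N // x ≠ i}) j'
        = ∑ n : {x : Fin N // x ≠ i ∧ x ≠ j}, ((M2 - z • 1)⁻¹) m n * H (n : Fin N) j := by
      rw [← Equiv.sum_comp e (fun n : {y : {x : Fin N // x ≠ i} // y ≠ j'} =>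
        Bsub⁻¹ (e m) n * (M1 - z • 1) (n : {x : Fin N // x ≠ i}) j')]
      apply Finset.sum_congr rfl
      intro n _
      rw [hM2inv m n, hM1H (e n)]
      rfl
    rw [hinner]
    rfl
  rw [hsum]
  -- final algebra
  have final : H i j * g + ∑ m : {x : Fin N // x ≠ i ∧ x ≠ j},
      H i (m : Fin N) * (-(∑ n : {x : Fin N // x ≠ i ∧ x ≠ j},
        ((M2 - z • 1)⁻¹) m n * H (n : Fin N) j) * g)
      = g * (H i j - ∑ m : {x : Fin N // x ≠ i ∧ x ≠ j},
          ∑ n : {x : Fin N // x ≠ i ∧ x ≠ j},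
            H i (m : Fin N) * ((M2 - z • 1)⁻¹) m n * H (n : Fin N) j) := by
    have key : ∀ m : {x : Fin N // x ≠ i ∧ x ≠ j},
        H i (m : Fin N) * (-(∑ n : {x : Fin N // x ≠ i ∧ x ≠ j},
          ((M2 - z • 1)⁻¹) m n * H (n : Fin N) j) * g)
        = g * -(∑ n : {x : Fin N // x ≠ i ∧ x ≠ j},
            H i (m : Fin N) * ((M2 - z • 1)⁻¹) m n * H (n : Fin N) j) := by
      intro m
      have : ∑ n : {x : Fin N // x ≠ i ∧ x ≠ j},
          H i (m : Fin N) * ((M2 - z • 1)⁻¹) m n * H (n : Fin N) j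
          = H i (m : Fin N) * ∑ n : {x : Fin N // x ≠ i ∧ x ≠ j},
              ((M2 - z • 1)⁻¹) m n * H (n : Fin N) j := by
        rw [Finset.mul_sum]
        exact Finset.sum_congr rfl fun n _ => (mul_assoc _ _ _)
      rw [this]
      ring
    rw [Finset.sum_congr rfl (fun m _ => key m), ← Finset.mul_sum, Finset.sum_neg_distrib]
    ring
  rw [final]
  ring
end

section
/- Let m_fc solve the Pastur relation m_fc(z) = ∫ dμ(v)/(λv - z - m_fc(z)) on ℂ^+, and suppose that for some z = E + iη the quantity g(v) := (λv - z - m_fc(z))^{-1} satisfies c ≤ |λv - z - m_fc(z)| ≤ C uniformly over the support of μ. Define R_2(z) = ∫ dμ(v)/(λv - z - m_fc(z))². Then 1 - R_2(z) = η / Im(z + m_fc(z)) + T(z), where |T(z)| ≤ (2/c⁴)·C²·(Im(z + m_fc(z)))·(C + Im(z + m_fc(z))). In particular, |1 - R_2(z)| ≤ η/Im(z + m_fc(z)) + C' · Im(z + m_fc(z)) for a constant C' depending only on c and C. -/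
open MeasureTheory

private lemma aux_diff_eq (w : ℂ) (hw : w ≠ 0) :
    (((Complex.normSq w)⁻¹ : ℝ) : ℂ) - 1 / w ^ 2
      = (w - (starRingEnd ℂ) w) / (w ^ 2 * (starRingEnd ℂ) w) := by
  have hcw : (starRingEnd ℂ) w ≠ 0 := by simpa using hw
  rw [Complex.ofReal_inv, ← Complex.mul_conj, one_div]
  field_simp

set_option maxHeartbeats 1000000 in
/-- Behaviour of `1 - R₂(z)` for the Pastur relation: with `R₂ = ∫ dμ(v)/(λv-z-m)²`,
one has `1 - R₂ = η/Im(z+m) + T` with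
`|T| ≤ (2/c⁴) C² Im(z+m) (C + Im(z+m))`, and in particular
`|1 - R₂| ≤ η/Im(z+m) + (4C³/c⁴) Im(z+m)`. -/
theorem one_minus_R2_bound (μ : Measure ℝ) [IsProbabilityMeasure μ]
    (hsupp : μ (Set.Icc (-1 : ℝ) 1)ᶜ = 0)
    (lam : ℝ) (hlam : 0 ≤ lam) (z : ℂ) (hz : 0 < z.im)
    (c C : ℝ) (hc : 0 < c) (hcC : c ≤ C)
    (m : ℂ) (hmim : 0 ≤ m.im)
    (hpastur : m = ∫ v : ℝ, 1 / ((lam : ℂ) * (v : ℂ) - z - m) ∂μ)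
    (hbound : ∀ v ∈ Set.Icc (-1 : ℝ) 1,
      c ≤ ‖(lam : ℂ) * (v : ℂ) - z - m‖ ∧
        ‖(lam : ℂ) * (v : ℂ) - z - m‖ ≤ C) :
    ∃ T : ℂ,
      1 - (∫ v : ℝ, 1 / ((lam : ℂ) * (v : ℂ) - z - m) ^ 2 ∂μ)
          = ((z.im / (z + m).im : ℝ) : ℂ) + T
        ∧ ‖T‖ ≤ 2 / c ^ 4 * C ^ 2 * (z + m).im * (C + (z + m).im)
        ∧ ‖1 - ∫ v : ℝ, 1 / ((lam : ℂ) * (v : ℂ) - z - m) ^ 2 ∂μ‖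
            ≤ z.im / (z + m).im + 4 * C ^ 3 / c ^ 4 * (z + m).im := by
  have hC : 0 < C := lt_of_lt_of_le hc hcC
  set e : ℝ := (z + m).im with he
  have heq : e = z.im + m.im := by simp [he, Complex.add_im]
  have hη : 0 < e := by rw [heq]; linarith
  -- a.e. membership in Icc
  have hae : ∀ᵐ v ∂μ, v ∈ Set.Icc (-1 : ℝ) 1 := by
    rw [ae_iff]; exact hsupp
  -- basic w facts
  have hwim : ∀ v : ℝ, ((lam : ℂ) * (v : ℂ) - z - m).im = -e := by
    intro v
    simp [Complex.sub_im, Complex.add_im, Complex.mul_im, heq]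
    ring
  have hwm : Measurable (fun v : ℝ => (lam : ℂ) * (v : ℂ) - z - m) := by fun_prop
  have hwne : ∀ v ∈ Set.Icc (-1:ℝ) 1, (lam : ℂ) * (v : ℂ) - z - m ≠ 0 := by
    intro v hv h
    have h1 := (hbound v hv).1
    rw [h] at h1; simp at h1; linarith
  have habs : ∀ v ∈ Set.Icc (-1:ℝ) 1, 0 < ‖(lam : ℂ) * (v : ℂ) - z - m‖ :=
    fun v hv => lt_of_lt_of_le hc (hbound v hv).1
  -- integrability
  have hi1 : Integrable (fun v : ℝ => 1 / ((lam : ℂ) * (v : ℂ) - z - m)) μ := by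
    refine Integrable.mono' (integrable_const (1/c)) ?_ ?_
    · exact (hwm.inv.aestronglyMeasurable).congr
        (Filter.Eventually.of_forall fun v => (one_div _).symm)
    · filter_upwards [hae] with v hv
      rw [norm_div, norm_one]
      exact one_div_le_one_div_of_le hc (hbound v hv).1
  have hi2 : Integrable (fun v : ℝ => 1 / ((lam : ℂ) * (v : ℂ) - z - m) ^ 2) μ := by
    refine Integrable.mono' (integrable_const (1/c^2)) ?_ ?_
    · exact ((hwm.pow_const 2).inv.aestronglyMeasurable).congr
        (Filter.Eventually.of_forall fun v => (one_div _).symm)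
    · filter_upwards [hae] with v hv
      rw [norm_div, norm_one, norm_pow]
      have h1 := (hbound v hv).1
      gcongr
  have hi3 : Integrable (fun v : ℝ => (Complex.normSq ((lam : ℂ) * (v : ℂ) - z - m))⁻¹) μ := by
    refine Integrable.mono' (integrable_const (1/c^2)) ?_ ?_
    · exact ((Complex.continuous_normSq.measurable.comp hwm).inv).aestronglyMeasurable
    · filter_upwards [hae] with v hv
      rw [Real.norm_eq_abs, abs_inv, ← Complex.sq_norm, abs_of_nonneg (by positivity), ← one_div]
      have h1 := (hbound v hv).1
      gcongr
  -- pointwise bound for the difference integrand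
  have hnorm4 : ∀ v ∈ Set.Icc (-1:ℝ) 1,
      ‖(((Complex.normSq ((lam : ℂ) * (v : ℂ) - z - m))⁻¹ : ℝ) : ℂ)
        - 1 / ((lam : ℂ) * (v : ℂ) - z - m) ^ 2‖ ≤ 2 * e / c ^ 3 := by
    intro v hv
    rw [aux_diff_eq _ (hwne v hv), norm_div, norm_mul, norm_pow]
    have hsub : ‖((lam : ℂ) * (v : ℂ) - z - m)
        - (starRingEnd ℂ) ((lam : ℂ) * (v : ℂ) - z - m)‖ = 2 * e := by
      rw [Complex.sub_conj, norm_mul, Complex.norm_I, mul_one, Complex.norm_real, Real.norm_eq_abs, hwim v]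
      rw [abs_of_nonpos (by nlinarith)]
      ring
    rw [hsub, Complex.norm_conj]
    have h1 := (hbound v hv).1
    have h2 := habs v hv
    rw [div_le_div_iff₀ (mul_pos (pow_pos h2 2) h2) (by positivity)]
    nlinarith [pow_le_pow_left₀ hc.le h1 3,
      mul_nonneg hη.le (sub_nonneg.mpr (pow_le_pow_left₀ hc.le h1 3))]
  -- the imaginary-part identity : m.im = e * I3
  set I3 : ℝ := ∫ v : ℝ, (Complex.normSq ((lam : ℂ) * (v : ℂ) - z - m))⁻¹ ∂μ with hI3
  have him : m.im = e * I3 := by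
    have h0 : m.im = ∫ v : ℝ, (1 / ((lam : ℂ) * (v : ℂ) - z - m)).im ∂μ := by
      conv_lhs => rw [hpastur]
      simp only [← RCLike.im_eq_complex_im]
      exact (integral_im hi1).symm
    rw [h0, hI3, ← integral_const_mul]
    refine integral_congr_ae ?_
    filter_upwards with v
    rw [one_div, Complex.inv_im, hwim v]
    field_simp
  -- key real identity
  have hkey : 1 - I3 = z.im / e := by
    field_simp
    nlinarith [him, heq]
  -- C ≥ 1
  have hC1 : 1 ≤ C := by
    have hI3lt : I3 < 1 := by nlinarith [him, heq]
    have hle : (1:ℝ)/C^2 ≤ I3 := by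
      have h : ∫ (_ : ℝ), (1:ℝ)/C^2 ∂μ ≤ I3 := by
        refine integral_mono_ae (integrable_const _) hi3 ?_
        filter_upwards [hae] with v hv
        rw [one_div, ← Complex.sq_norm]
        have h2 := (hbound v hv).2
        have h3 := habs v hv
        gcongr
      simpa using h
    have h12 : (1:ℝ) < C^2 := (div_lt_one (by positivity)).mp (lt_of_le_of_lt hle hI3lt)
    nlinarith [sq_nonneg (C - 1)]
  -- the T-bound, as it will be used twice
  have hi3c : Integrable (fun v : ℝ =>
      (((Complex.normSq ((lam : ℂ) * (v : ℂ) - z - m))⁻¹ : ℝ) : ℂ)) μ := hi3.ofReal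
  have hT : ((I3 : ℝ) : ℂ) - (∫ v : ℝ, 1 / ((lam : ℂ) * (v : ℂ) - z - m) ^ 2 ∂μ)
      = ∫ v : ℝ, ((((Complex.normSq ((lam : ℂ) * (v : ℂ) - z - m))⁻¹ : ℝ) : ℂ)
          - 1 / ((lam : ℂ) * (v : ℂ) - z - m) ^ 2) ∂μ := by
    rw [integral_sub hi3c hi2]
    congr 1
    rw [hI3]
    exact integral_ofReal.symm
  have hb : ‖((I3 : ℝ) : ℂ)
      - (∫ v : ℝ, 1 / ((lam : ℂ) * (v : ℂ) - z - m) ^ 2 ∂μ)‖ ≤ 2 * e / c ^ 3 := by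
    rw [hT]
    calc ‖∫ v : ℝ, ((((Complex.normSq ((lam : ℂ) * (v : ℂ) - z - m))⁻¹ : ℝ) : ℂ)
          - 1 / ((lam : ℂ) * (v : ℂ) - z - m) ^ 2) ∂μ‖
        ≤ 2 * e / c ^ 3 * (μ Set.univ).toReal :=
          norm_integral_le_of_norm_le_const
            (by filter_upwards [hae] with v hv using hnorm4 v hv)
      _ = 2 * e / c ^ 3 := by simp
  have hCcube : C ≤ C ^ 3 := by
    nlinarith [mul_nonneg (mul_nonneg hC.le (sub_nonneg.mpr hC1)) (by linarith : (0:ℝ) ≤ C + 1)]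
  have heqT : 1 - (∫ v : ℝ, 1 / ((lam : ℂ) * (v : ℂ) - z - m) ^ 2 ∂μ)
      = ((z.im / e : ℝ) : ℂ) + (((I3 : ℝ) : ℂ)
          - ∫ v : ℝ, 1 / ((lam : ℂ) * (v : ℂ) - z - m) ^ 2 ∂μ) := by
    have h : ((z.im / e : ℝ) : ℂ) = 1 - ((I3 : ℝ) : ℂ) := by
      rw [← hkey]; push_cast; ring
    rw [h]; ring
  clear_value I3
  clear_value e
  refine ⟨((I3 : ℝ) : ℂ) - ∫ v : ℝ, 1 / ((lam : ℂ) * (v : ℂ) - z - m) ^ 2 ∂μ,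
    heqT, ?_, ?_⟩
  · -- bound on T
    refine hb.trans ?_
    have hrw : 2 / c ^ 4 * C ^ 2 * e * (C + e) = 2 * C ^ 2 * e * (C + e) / c ^ 4 := by ring
    rw [hrw, div_le_div_iff₀ (by positivity) (by positivity)]
    have h1 : c ≤ C ^ 2 * (C + e) := by nlinarith
    nlinarith [mul_le_mul_of_nonneg_left h1
      (mul_nonneg (mul_nonneg (by norm_num : (0:ℝ) ≤ 2) hη.le) (pow_nonneg hc.le 3))]
  · -- final bound
    have habs0 : ‖((z.im / e : ℝ) : ℂ)‖ = z.im / e := by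
      rw [Complex.norm_real, Real.norm_eq_abs, abs_of_nonneg (by positivity)]
    rw [heqT]
    refine (norm_add_le _ _).trans ?_
    rw [habs0]
    gcongr
    refine hb.trans ?_
    have hrw : 4 * C ^ 3 / c ^ 4 * e = 4 * C ^ 3 * e / c ^ 4 := by ring
    rw [hrw, div_le_div_iff₀ (by positivity) (by positivity)]
    have h2 : c ≤ 2 * C ^ 3 := by nlinarith
    nlinarith [mul_le_mul_of_nonneg_left h2
      (mul_nonneg (mul_nonneg (by norm_num : (0:ℝ) ≤ 2) hη.le) (pow_nonneg hc.le 3))]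
end
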